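/- Let A be a matrix with entries in B(H). Then A ∈ L¹_l(ℓ²(H)) if and only if the function t ↦ f_A(t) = (e^{i(j−k)t}T_{kj}) is continuous from 𝕋 into M_l(ℓ²(H)) (with the left Schur multiplier norm). -/

import Mathlib

open Finset Filter

noncomputable section

variable {H : Type*} [NormedAddCommGroup H] [InnerProductSpace ℂ H]
  [CompleteSpace H] [TopologicalSpace.SeparableSpace H]

/-- `A` defines a bounded operator on `ℓ²(H)` with norm at most `C`, expressed through
uniform bounds of the associated bilinear form on finitely supported sequences. -/
def SchurBoundedBy (A : ℕ → ℕ → (H →L[ℂ] H)) (C : ℝ) : Prop :=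
  ∀ (F G : Finset ℕ) (x y : ℕ → H),
    ‖∑ k ∈ G, ∑ j ∈ F, (inner ℂ (A k j (x j)) (y k) : ℂ)‖ ≤
      C * Real.sqrt (∑ j ∈ F, ‖x j‖ ^ 2) * Real.sqrt (∑ k ∈ G, ‖y k‖ ^ 2)

/-- `A ∈ B(ℓ²(H))`. -/
def MemB (A : ℕ → ℕ → (H →L[ℂ] H)) : Prop :=
  ∃ C, 0 ≤ C ∧ SchurBoundedBy A C

/-- The Schur product of two operator matrices: entrywise composition. -/
def schur (A B : ℕ → ℕ → (H →L[ℂ] H)) : ℕ → ℕ → (H →L[ℂ] H) :=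
  fun k j => (A k j).comp (B k j)

/-- `A` is a right Schur multiplier with multiplier norm at most `C`. -/
def MrBoundedBy (A : ℕ → ℕ → (H →L[ℂ] H)) (C : ℝ) : Prop :=
  ∀ (B : ℕ → ℕ → (H →L[ℂ] H)) (D : ℝ), 0 ≤ D → SchurBoundedBy B D →
    SchurBoundedBy (schur B A) (C * D)

/-- `A` is a left Schur multiplier with multiplier norm at most `C`. -/
def MlBoundedBy (A : ℕ → ℕ → (H →L[ℂ] H)) (C : ℝ) : Prop :=
  ∀ (B : ℕ → ℕ → (H →L[ℂ] H)) (D : ℝ), 0 ≤ D → SchurBoundedBy B D →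
    SchurBoundedBy (schur A B) (C * D)

/-- `A ∈ M_r(ℓ²(H))`. -/
def MemMr (A : ℕ → ℕ → (H →L[ℂ] H)) : Prop :=
  ∃ C, 0 ≤ C ∧ MrBoundedBy A C

/-- `A ∈ M_l(ℓ²(H))`. -/
def MemMl (A : ℕ → ℕ → (H →L[ℂ] H)) : Prop :=
  ∃ C, 0 ≤ C ∧ MlBoundedBy A C

/-- A matrix polynomial: supported on finitely many diagonals, with uniformly
bounded operator entries. -/
def IsMatPoly (A : ℕ → ℕ → (H →L[ℂ] H)) : Prop :=
  (∃ N : ℕ, ∀ k j : ℕ, N < ((j : ℤ) - (k : ℤ)).natAbs → A k j = 0) ∧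
    ∃ M : ℝ, ∀ k j : ℕ, ‖A k j‖ ≤ M

/-- `A ∈ L¹_r(ℓ²(H))`: `A` is a right Schur multiplier lying in the closure of the
matrix polynomials in the right multiplier norm. -/
def MemL1r (A : ℕ → ℕ → (H →L[ℂ] H)) : Prop :=
  MemMr A ∧ ∀ ε : ℝ, 0 < ε → ∃ P : ℕ → ℕ → (H →L[ℂ] H),
    IsMatPoly P ∧ MrBoundedBy (fun k j => A k j - P k j) ε

/-- `A ∈ L¹_l(ℓ²(H))`: `A` is a left Schur multiplier lying in the closure of the
matrix polynomials in the left multiplier norm. -/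
def MemL1l (A : ℕ → ℕ → (H →L[ℂ] H)) : Prop :=
  MemMl A ∧ ∀ ε : ℝ, 0 < ε → ∃ P : ℕ → ℕ → (H →L[ℂ] H),
    IsMatPoly P ∧ MlBoundedBy (fun k j => A k j - P k j) ε

/-- The modulated matrix `f_A(t) = (e^{i(j-k)t} T_{kj})`. -/
def modMatrix (A : ℕ → ℕ → (H →L[ℂ] H)) (t : ℝ) : ℕ → ℕ → (H →L[ℂ] H) :=
  fun k j => Complex.exp ((((j : ℤ) - (k : ℤ) : ℤ) : ℂ) * t * Complex.I) • A k j

/-!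
Modulating a matrix by the unimodular Toeplitz matrix `(e^{i(j-k)t})` is conjugation by two
diagonal unitaries, so it preserves Schur bounds. Averaging these modulations over the `m`-th
roots of unity picks out a single diagonal; as a consequence a band matrix with small entries is a
small left multiplier, which makes `t ↦ f_P(t)` Lipschitz for every matrix polynomial `P`, and
`t ↦ f_A(t)` continuous for every `A` in their closure.

Conversely, on every finite block, `A - σ_n(A)` (with `σ_n = fejerMean n`) is exactly the
average of `A - f_A(t)` against the Fejér kernel sampled at the `m`-th roots of unity, once `m`
exceeds `n` plus the size of the block. Continuity at `0` makes the terms with `t` near `0`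
(mod `2π`) small, while elsewhere the Fejér kernel is at most `π² / ((n + 1) δ²)` and `A - f_A(t)`
is bounded by `2 ‖A‖`. So the matrix polynomials `σ_n(A)` converge to `A`.
-/

open scoped Real ComplexConjugate InnerProductSpace

def phase (d : ℤ) (t : ℝ) : ℂ := Complex.exp (d * t * Complex.I)

theorem norm_phase (d : ℤ) (t : ℝ) : ‖phase d t‖ = 1 := by
  simpa only [phase, Complex.ofReal_mul, Complex.ofReal_intCast] using
    Complex.norm_exp_ofReal_mul_I (d * t)

theorem phase_add_left (d d' : ℤ) (t : ℝ) : phase (d + d') t = phase d t * phase d' t := by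
  simp only [phase, ← Complex.exp_add]
  push_cast
  ring_nf

theorem phase_zero_left (t : ℝ) : phase 0 t = 1 := by simp [phase]

theorem phase_zero_right (d : ℤ) : phase d 0 = 1 := by simp [phase]

theorem phase_natCast (r : ℕ) (t : ℝ) : phase r t = phase 1 t ^ r := by
  simp only [phase, ← Complex.exp_nat_mul]
  push_cast
  ring_nf

theorem conj_phase (d : ℤ) (t : ℝ) : conj (phase d t) = phase (-d) t := by
  simp only [phase, ← Complex.exp_conj, map_mul, Complex.conj_I, Complex.conj_ofReal,
    map_intCast]
  push_cast
  ring_nf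

theorem phase_sub_two_pi (d : ℤ) (t : ℝ) : phase d (t - 2 * π) = phase d t := by
  have h : (d : ℂ) * ((t - 2 * π : ℝ) : ℂ) * Complex.I
      = d * t * Complex.I + (-d : ℤ) * (2 * π * Complex.I) := by
    push_cast
    ring
  rw [phase, h, Complex.exp_add, Complex.exp_int_mul_two_pi_mul_I, mul_one, phase]

theorem norm_phase_sub_phase_le (d : ℤ) (s t : ℝ) :
    ‖phase d s - phase d t‖ ≤ |(d : ℝ)| * |s - t| := by
  have h : phase d s - phase d t
      = phase d t * (Complex.exp (Complex.I * ((d * (s - t) : ℝ) : ℂ)) - 1) := by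
    simp only [phase, mul_sub, ← Complex.exp_add, mul_one]
    push_cast
    ring_nf
  rw [h, norm_mul, norm_phase, one_mul, ← abs_mul]
  exact Real.norm_exp_I_mul_ofReal_sub_one_le

theorem sum_phase_two_pi_mul_div {m : ℕ} {a : ℤ} (ha : |a| < m) :
    ∑ l ∈ range m, phase a (2 * π * l / m) = if a = 0 then (m : ℂ) else 0 := by
  have hm : m ≠ 0 := by rintro rfl; exact absurd ha (by simp)
  have hζ := Complex.isPrimitiveRoot_exp m hm
  set ζ := Complex.exp (2 * π * Complex.I / m)
  have hpow : ∀ l : ℕ, phase a (2 * π * l / m) = (ζ ^ a) ^ l := by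
    intro l
    rw [← zpow_natCast, ← zpow_mul, ← Complex.exp_int_mul, phase]
    push_cast
    ring_nf
  simp only [hpow]
  split_ifs with h0
  · simp [h0]
  · have hne : ζ ^ a ≠ 1 := by
      rw [Ne, hζ.zpow_eq_one_iff_dvd]
      intro hdvd
      exact absurd (Int.le_of_dvd (abs_pos.2 h0) ((dvd_abs _ _).2 hdvd)) (not_le.2 ha)
    rw [geom_sum_eq hne, ← zpow_natCast, ← zpow_mul, mul_comm, zpow_mul, zpow_natCast,
      hζ.pow_eq_one, one_zpow, sub_self, zero_div]

theorem two_mul_div_pi_le_norm_phase_sub_one {δ t : ℝ} (hδ : 0 ≤ δ) (h₁ : δ ≤ t)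
    (h₂ : t ≤ 2 * π - δ) : 2 * δ / π ≤ ‖phase 1 t - 1‖ := by
  have h : ‖phase 1 t - 1‖ = 2 * |Real.sin (t / 2)| := by
    rw [phase, Int.cast_one, one_mul, mul_comm, Complex.norm_exp_I_mul_ofReal_sub_one,
      norm_mul, Real.norm_eq_abs, Real.norm_eq_abs, abs_two]
  have hsin : δ / π ≤ Real.sin (t / 2) := by
    rcases le_total (t / 2) (π / 2) with ht | ht
    · calc δ / π ≤ 2 / π * (t / 2) := by
            rw [div_le_iff₀ Real.pi_pos]; field_simp; linarith
        _ ≤ Real.sin (t / 2) := Real.mul_le_sin (by linarith) ht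
    · calc δ / π ≤ 2 / π * (π - t / 2) := by
            rw [div_le_iff₀ Real.pi_pos]; field_simp; linarith
        _ ≤ Real.sin (π - t / 2) := Real.mul_le_sin (by linarith) (by linarith)
        _ = Real.sin (t / 2) := Real.sin_pi_sub _
  rw [h, abs_of_nonneg ((div_nonneg hδ Real.pi_pos.le).trans hsin)]
  linarith [show 2 * δ / π = 2 * (δ / π) by ring]

def fejerKernel (n : ℕ) (t : ℝ) : ℝ := ‖∑ r ∈ range (n + 1), phase r t‖ ^ 2 / (n + 1)

/-- This is `max 0 (1 - |d| / (n + 1))`, the `d`-th Fourier coefficient of `fejerKernel n`. -/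
def fejerCoeff (n : ℕ) (d : ℤ) : ℝ :=
  #{p ∈ range (n + 1) ×ˢ range (n + 1) | (p.2 : ℤ) - p.1 = d} / (n + 1)

theorem fejerKernel_nonneg (n : ℕ) (t : ℝ) : 0 ≤ fejerKernel n t := by
  unfold fejerKernel
  positivity

theorem ofReal_fejerKernel (n : ℕ) (t : ℝ) :
    (fejerKernel n t : ℂ) =
      (∑ p ∈ range (n + 1) ×ˢ range (n + 1), phase (p.1 - p.2) t) / (n + 1) := by
  rw [fejerKernel, Complex.ofReal_div, Complex.ofReal_pow, ← Complex.mul_conj', map_sum,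
    Finset.sum_mul_sum, Finset.sum_product]
  push_cast
  simp only [conj_phase, ← phase_add_left, sub_eq_add_neg]

theorem fejerKernel_le {n : ℕ} {δ t : ℝ} (hδ : 0 < δ) (h₁ : δ ≤ t) (h₂ : t ≤ 2 * π - δ) :
    fejerKernel n t ≤ π ^ 2 / ((n + 1) * δ ^ 2) := by
  have hz := two_mul_div_pi_le_norm_phase_sub_one hδ.le h₁ h₂
  have hz0 : 0 < ‖phase 1 t - 1‖ := lt_of_lt_of_le (by positivity) hz
  have hgeom : ‖∑ r ∈ range (n + 1), phase r t‖ ≤ π / δ := by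
    rw [Finset.sum_congr rfl fun r _ => phase_natCast r t,
      geom_sum_eq (sub_ne_zero.1 (norm_pos_iff.1 hz0)), norm_div]
    calc ‖phase 1 t ^ (n + 1) - 1‖ / ‖phase 1 t - 1‖ ≤ 2 / (2 * δ / π) := by
          gcongr
          calc ‖phase 1 t ^ (n + 1) - 1‖ ≤ ‖phase 1 t ^ (n + 1)‖ + ‖(1 : ℂ)‖ := norm_sub_le _ _
            _ = 2 := by rw [norm_pow, norm_phase, one_pow, norm_one]; norm_num
      _ = π / δ := by field_simp
  calc fejerKernel n t ≤ (π / δ) ^ 2 / (n + 1) := by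
        unfold fejerKernel
        gcongr
    _ = π ^ 2 / ((n + 1) * δ ^ 2) := by rw [div_pow, div_div, mul_comm]

theorem sum_fejerKernel_mul_phase {n m : ℕ} {d : ℤ} (hm : n + d.natAbs < m) :
    ∑ l ∈ range m, ((fejerKernel n (2 * π * l / m) / m : ℝ) : ℂ) * phase d (2 * π * l / m) =
      fejerCoeff n d := by
  set S := range (n + 1) ×ˢ range (n + 1)
  have hm0 : (m : ℂ) ≠ 0 := by norm_cast; omega
  have hdelta : ∀ p ∈ S, ∑ l ∈ range m, phase (p.1 - p.2 + d) (2 * π * l / m) =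
      if (p.2 : ℤ) - p.1 = d then (m : ℂ) else 0 := by
    intro p hp
    rw [Finset.mem_product, mem_range, mem_range] at hp
    rw [sum_phase_two_pi_mul_div (abs_lt.2 ⟨by omega, by omega⟩)]
    exact if_congr (by omega) rfl rfl
  calc ∑ l ∈ range m, ((fejerKernel n (2 * π * l / m) / m : ℝ) : ℂ) * phase d (2 * π * l / m)
      = (∑ p ∈ S, ∑ l ∈ range m, phase (p.1 - p.2 + d) (2 * π * l / m)) / (n + 1) / m := by
        simp only [Complex.ofReal_div, Complex.ofReal_natCast, ofReal_fejerKernel,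
          Finset.sum_div, Finset.sum_mul]
        rw [Finset.sum_comm]
        refine Finset.sum_congr rfl fun p _ => Finset.sum_congr rfl fun l _ => ?_
        rw [phase_add_left]
        ring
    _ = #{p ∈ S | (p.2 : ℤ) - p.1 = d} * m / (n + 1) / m := by
        rw [Finset.sum_congr rfl hdelta, Finset.sum_ite, Finset.sum_const, Finset.sum_const_zero,
          add_zero, nsmul_eq_mul]
    _ = fejerCoeff n d := by
        rw [fejerCoeff, mul_div_right_comm, mul_div_cancel_right₀ _ hm0]
        push_cast
        rfl

theorem fejerCoeff_zero (n : ℕ) : fejerCoeff n 0 = 1 := by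
  have h : ({p ∈ range (n + 1) ×ˢ range (n + 1) | (p.2 : ℤ) - p.1 = 0}) = (range (n + 1)).diag := by
    ext ⟨a, b⟩
    simp only [Finset.mem_filter, Finset.mem_product, Finset.mem_diag, mem_range]
    omega
  rw [fejerCoeff, h, Finset.diag_card, card_range]
  push_cast
  exact div_self (by positivity)

theorem fejerCoeff_eq_zero {n : ℕ} {d : ℤ} (h : n < d.natAbs) : fejerCoeff n d = 0 := by
  rw [fejerCoeff, div_eq_zero_iff, Nat.cast_eq_zero, Finset.card_eq_zero]
  left
  refine Finset.filter_eq_empty_iff.2 fun p hp => ?_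
  rw [Finset.mem_product, mem_range, mem_range] at hp
  omega

theorem abs_fejerCoeff_le_one (n : ℕ) (d : ℤ) : |fejerCoeff n d| ≤ 1 := by
  have hcard : #{p ∈ range (n + 1) ×ˢ range (n + 1) | (p.2 : ℤ) - p.1 = d} ≤ n + 1 := by
    refine (Finset.card_le_card_of_injOn Prod.fst (fun p hp => ?_) fun p hp q hq hpq => ?_).trans
      (card_range _).le
    · exact (Finset.mem_product.1 (Finset.mem_filter.1 hp).1).1
    · have := (Finset.mem_filter.1 hp).2
      have := (Finset.mem_filter.1 hq).2
      exact Prod.ext hpq (by omega)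
  rw [fejerCoeff, abs_of_nonneg (by positivity), div_le_one (by positivity)]
  exact_mod_cast hcard

theorem sum_fejerKernel_div {n m : ℕ} (hm : n < m) :
    ∑ l ∈ range m, fejerKernel n (2 * π * l / m) / m = 1 := by
  have h := sum_fejerKernel_mul_phase (d := 0) (m := m) (n := n) (by simpa using hm)
  simp only [phase_zero_left, mul_one, fejerCoeff_zero] at h
  exact_mod_cast h

theorem sum_fejerKernel_div_mul_ite_le {n m : ℕ} (hm : n < m) {η C δ : ℝ} (hη : 0 ≤ η)
    (hC : 0 ≤ C) (hδ : 0 < δ) :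
    ∑ l ∈ range m, fejerKernel n (2 * π * l / m) / m *
        (if δ ≤ 2 * π * l / m ∧ 2 * π * l / m ≤ 2 * π - δ then C else η) ≤
      η + π ^ 2 / ((n + 1) * δ ^ 2) * C := by
  set κ := π ^ 2 / ((n + 1) * δ ^ 2)
  have hm0 : (m : ℝ) ≠ 0 := by norm_cast; omega
  have hterm : ∀ l ∈ range m, fejerKernel n (2 * π * l / m) / m *
      (if δ ≤ 2 * π * l / m ∧ 2 * π * l / m ≤ 2 * π - δ then C else η) ≤
        fejerKernel n (2 * π * l / m) / m * η + κ / m * C := by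
    intro l _
    have hK := fejerKernel_nonneg n (2 * π * l / m)
    split_ifs with hfar
    · have : fejerKernel n (2 * π * l / m) / m ≤ κ / m :=
        div_le_div_of_nonneg_right (fejerKernel_le hδ hfar.1 hfar.2) (Nat.cast_nonneg _)
      have : 0 ≤ fejerKernel n (2 * π * l / m) / m * η := by positivity
      nlinarith
    · have : 0 ≤ κ / m * C := by positivity
      linarith
  calc _ ≤ ∑ l ∈ range m, (fejerKernel n (2 * π * l / m) / m * η + κ / m * C) :=
        Finset.sum_le_sum hterm
    _ = η + κ * C := by
        rw [Finset.sum_add_distrib, ← Finset.sum_mul, sum_fejerKernel_div hm, Finset.sum_const,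
          card_range, nsmul_eq_mul]
        field_simp

section Matrices

variable {E : Type*} [NormedAddCommGroup E] [InnerProductSpace ℂ E]
  {A A' B M P Q : ℕ → ℕ → (E →L[ℂ] E)} {C C' D η : ℝ}

theorem modMatrix_apply (A : ℕ → ℕ → (E →L[ℂ] E)) (t : ℝ) (k j : ℕ) :
    modMatrix A t k j = phase (j - k) t • A k j :=
  rfl

theorem modMatrix_zero (A : ℕ → ℕ → (E →L[ℂ] E)) : modMatrix A 0 = A := by
  funext k j
  rw [modMatrix_apply, phase_zero_right, one_smul]

theorem modMatrix_sub_two_pi (A : ℕ → ℕ → (E →L[ℂ] E)) (t : ℝ) :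
    modMatrix A (t - 2 * π) = modMatrix A t := by
  funext k j
  rw [modMatrix_apply, modMatrix_apply, phase_sub_two_pi]

theorem SchurBoundedBy.mono (h : SchurBoundedBy A C) (hC : C ≤ C') : SchurBoundedBy A C' :=
  fun F G x y => (h F G x y).trans (by gcongr)

theorem SchurBoundedBy.add (h : SchurBoundedBy A C) (h' : SchurBoundedBy A' C') :
    SchurBoundedBy (fun k j => A k j + A' k j) (C + C') := by
  intro F G x y
  simp only [add_apply, inner_add_left, Finset.sum_add_distrib]
  linarith [norm_add_le (∑ k ∈ G, ∑ j ∈ F, ⟪A k j (x j), y k⟫_ℂ)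
    (∑ k ∈ G, ∑ j ∈ F, ⟪A' k j (x j), y k⟫_ℂ), h F G x y, h' F G x y]

theorem SchurBoundedBy.neg (h : SchurBoundedBy A C) : SchurBoundedBy (fun k j => -A k j) C := by
  intro F G x y
  simpa only [neg_apply, inner_neg_left, Finset.sum_neg_distrib, norm_neg]
    using h F G x y

theorem SchurBoundedBy.sum_smul {ι : Type*} (s : Finset ι) (w : ι → ℂ)
    {N : ι → ℕ → ℕ → (E →L[ℂ] E)} {c : ι → ℝ} (hN : ∀ i ∈ s, SchurBoundedBy (N i) (c i)) :
    SchurBoundedBy (fun k j => ∑ i ∈ s, w i • N i k j) (∑ i ∈ s, ‖w i‖ * c i) := by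
  intro F G x y
  have h : ∑ k ∈ G, ∑ j ∈ F, ⟪(∑ i ∈ s, w i • N i k j) (x j), y k⟫_ℂ
      = ∑ i ∈ s, conj (w i) * ∑ k ∈ G, ∑ j ∈ F, ⟪N i k j (x j), y k⟫_ℂ := by
    simp only [_root_.sum_apply, smul_apply, sum_inner, inner_smul_left, Finset.mul_sum]
    exact (Finset.sum_congr rfl fun k _ => Finset.sum_comm).trans Finset.sum_comm
  rw [h, Finset.sum_mul, Finset.sum_mul]
  refine (norm_sum_le _ _).trans (Finset.sum_le_sum fun i hi => ?_)
  rw [norm_mul, Complex.norm_conj, mul_assoc, mul_assoc]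
  exact mul_le_mul_of_nonneg_left (by simpa only [mul_assoc] using hN i hi F G x y)
    (norm_nonneg (w i))

theorem SchurBoundedBy.norm_sum_inner_le_of_eqOn (h : SchurBoundedBy A C) {F G : Finset ℕ}
    (hMA : ∀ k ∈ G, ∀ j ∈ F, M k j = A k j) (x y : ℕ → E) :
    ‖∑ k ∈ G, ∑ j ∈ F, ⟪M k j (x j), y k⟫_ℂ‖ ≤
      C * √(∑ j ∈ F, ‖x j‖ ^ 2) * √(∑ k ∈ G, ‖y k‖ ^ 2) := by
  rw [Finset.sum_congr rfl fun k hk => Finset.sum_congr rfl fun j hj => by rw [hMA k hk j hj]]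
  exact h F G x y

theorem SchurBoundedBy.modMatrix (h : SchurBoundedBy A C) (t : ℝ) :
    SchurBoundedBy (_root_.modMatrix A t) C := by
  intro F G x y
  have hform : ∑ k ∈ G, ∑ j ∈ F, ⟪_root_.modMatrix A t k j (x j), y k⟫_ℂ
      = ∑ k ∈ G, ∑ j ∈ F, ⟪A k j (phase j t • x j), phase k t • y k⟫_ℂ := by
    refine Finset.sum_congr rfl fun k _ => Finset.sum_congr rfl fun j _ => ?_
    rw [modMatrix_apply, smul_apply, ContinuousLinearMap.map_smul,
      inner_smul_left, inner_smul_left, inner_smul_right, conj_phase, conj_phase, ← mul_assoc,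
      ← phase_add_left]
    congr 2
    ring
  simpa only [hform, norm_smul, norm_phase, one_mul] using
    h F G (fun j => phase j t • x j) (fun k => phase k t • y k)

def diagonalPart (d : ℤ) (A : ℕ → ℕ → (E →L[ℂ] E)) : ℕ → ℕ → (E →L[ℂ] E) :=
  fun k j => if (j : ℤ) - k = d then A k j else 0

theorem SchurBoundedBy.diagonalPart (h : SchurBoundedBy B D) (d : ℤ) :
    SchurBoundedBy (_root_.diagonalPart d B) D := by
  intro F G x y
  set m := F.sup id + G.sup id + d.natAbs + 1
  set t : ℕ → ℝ := fun l => 2 * π * l / m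
  have hm : (m : ℝ) ≠ 0 := by positivity
  have hsum := SchurBoundedBy.sum_smul (range m) (fun l => (m : ℂ)⁻¹ * phase (-d) (t l))
    (fun l _ => h.modMatrix (t l))
  have hw : ∑ l ∈ range m, ‖(m : ℂ)⁻¹ * phase (-d) (t l)‖ * D = D := by
    simp [norm_phase, hm]
  refine (hsum.norm_sum_inner_le_of_eqOn (fun k hk j hj => ?_) x y).trans_eq (by rw [hw])
  have hk' : k ≤ G.sup id := le_sup (f := id) hk
  have hj' : j ≤ F.sup id := le_sup (f := id) hj
  simp only [modMatrix_apply, smul_smul, ← Finset.sum_smul, mul_assoc, ← Finset.mul_sum,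
    ← phase_add_left]
  rw [sum_phase_two_pi_mul_div (abs_lt.2 ⟨by omega, by omega⟩), _root_.diagonalPart]
  split_ifs <;> first | omega | simp

theorem MlBoundedBy.mono (h : MlBoundedBy A C) (hC : C ≤ C') : MlBoundedBy A C' :=
  fun B D hD hB => (h B D hD hB).mono (mul_le_mul_of_nonneg_right hC hD)

theorem MlBoundedBy.add (h : MlBoundedBy A C) (h' : MlBoundedBy A' C') :
    MlBoundedBy (fun k j => A k j + A' k j) (C + C') := fun B D hD hB => by
  have := (h B D hD hB).add (h' B D hD hB)
  unfold schur at *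
  simpa only [ContinuousLinearMap.add_comp, add_mul] using this

theorem MlBoundedBy.neg (h : MlBoundedBy A C) : MlBoundedBy (fun k j => -A k j) C :=
  fun B D hD hB => by
  have := (h B D hD hB).neg
  unfold schur at *
  simpa only [ContinuousLinearMap.neg_comp] using this

theorem MlBoundedBy.sub (h : MlBoundedBy A C) (h' : MlBoundedBy A' C') :
    MlBoundedBy (fun k j => A k j - A' k j) (C + C') := by
  simpa only [sub_eq_add_neg] using h.add h'.neg

theorem MlBoundedBy.sum {ι : Type*} (s : Finset ι) {N : ι → ℕ → ℕ → (E →L[ℂ] E)} {c : ι → ℝ}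
    (h : ∀ i ∈ s, MlBoundedBy (N i) (c i)) :
    MlBoundedBy (fun k j => ∑ i ∈ s, N i k j) (∑ i ∈ s, c i) := fun B D hD hB => by
  have := SchurBoundedBy.sum_smul s (fun _ => 1) fun i hi => h i hi B D hD hB
  unfold schur at *
  simpa only [ContinuousLinearMap.finsetSum_comp, one_smul, norm_one, one_mul,
    Finset.sum_mul] using this

theorem MlBoundedBy.modMatrix (h : MlBoundedBy A C) (t : ℝ) :
    MlBoundedBy (_root_.modMatrix A t) C := fun B D hD hB => by
  have := (h B D hD hB).modMatrix t
  unfold schur _root_.modMatrix at *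
  simpa only [ContinuousLinearMap.smul_comp] using this

theorem MemMl.modMatrix (h : MemMl A) (t : ℝ) : MemMl (_root_.modMatrix A t) :=
  let ⟨C, hC, hAC⟩ := h
  ⟨C, hC, hAC.modMatrix t⟩

theorem norm_le_sqrt_sum_sq_norm {V : Type*} [SeminormedAddCommGroup V] {F : Finset ℕ} {j : ℕ}
    (hj : j ∈ F) (x : ℕ → V) :
    ‖x j‖ ≤ √(∑ i ∈ F, ‖x i‖ ^ 2) :=
  Real.le_sqrt_of_sq_le (Finset.single_le_sum (fun i _ => sq_nonneg ‖x i‖) hj)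

theorem schurBoundedBy_single (k j : ℕ) :
    SchurBoundedBy (fun k' j' => if k' = k ∧ j' = j then ContinuousLinearMap.id ℂ E else 0) 1 := by
  intro F G x y
  have hform : ∑ k' ∈ G, ∑ j' ∈ F,
      ⟪(if k' = k ∧ j' = j then ContinuousLinearMap.id ℂ E else 0) (x j'), y k'⟫_ℂ
        = if k ∈ G ∧ j ∈ F then ⟪x j, y k⟫_ℂ else 0 := by
    have hterm : ∀ k' j', ⟪(if k' = k ∧ j' = j then ContinuousLinearMap.id ℂ E else 0) (x j'),
        y k'⟫_ℂ = if k' = k then (if j' = j then ⟪x j', y k'⟫_ℂ else 0) else 0 := by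
      intro k' j'
      split_ifs <;> simp_all
    simp only [hterm]
    simp only [Finset.sum_ite_eq', Finset.sum_ite_irrel, Finset.sum_const_zero, ite_and]
  rw [hform, one_mul]
  split_ifs with hkj
  · exact (norm_inner_le_norm _ _).trans (mul_le_mul (norm_le_sqrt_sum_sq_norm hkj.2 x)
      (norm_le_sqrt_sum_sq_norm hkj.1 y) (norm_nonneg _) (Real.sqrt_nonneg _))
  · rw [norm_zero]
    positivity

theorem MlBoundedBy.norm_apply_le (h : MlBoundedBy A C) (hC : 0 ≤ C) (k j : ℕ) :
    ‖A k j‖ ≤ C := by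
  refine ContinuousLinearMap.opNorm_le_of_re_inner_le hC fun v u hv hu => ?_
  have := h _ 1 zero_le_one (schurBoundedBy_single k j) {j} {k} (fun _ => v) (fun _ => u)
  simp only [schur, Finset.sum_singleton, and_self, if_true, ContinuousLinearMap.comp_id, hv, hu,
    one_pow, Real.sqrt_one, mul_one] at this
  exact (Complex.re_le_norm _).trans this

theorem mlBoundedBy_of_diagonalPart_eq [CompleteSpace E] (d : ℤ) (hQ : diagonalPart d Q = Q)
    (hη : ∀ k j, ‖Q k j‖ ≤ η) : MlBoundedBy Q η := by
  intro B D hD hB F G x y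
  have hη0 : 0 ≤ η := (norm_nonneg _).trans (hη 0 0)
  -- Row `k` of `Q` is supported at column `k + d`; moving that entry to the other side of the
  -- inner product (as its adjoint) leaves the diagonal part of `B`.
  set y' : ℕ → E := fun k => ContinuousLinearMap.adjoint (Q k (k + d).toNat) (y k)
  have hterm : ∀ k j, ⟪schur Q B k j (x j), y k⟫_ℂ = ⟪diagonalPart d B k j (x j), y' k⟫_ℂ := by
    intro k j
    by_cases hkj : (j : ℤ) - k = d
    · have hj : (k + d).toNat = j := by omega
      simp only [schur, diagonalPart, if_pos hkj, y', hj, ContinuousLinearMap.comp_apply,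
        ContinuousLinearMap.adjoint_inner_right]
    · have hQkj : Q k j = 0 := by
        simpa [diagonalPart, hkj] using (congrFun₂ hQ k j).symm
      simp [schur, diagonalPart, hkj, hQkj]
  have hy' : √(∑ k ∈ G, ‖y' k‖ ^ 2) ≤ η * √(∑ k ∈ G, ‖y k‖ ^ 2) := by
    have hy'k : ∀ k, ‖y' k‖ ≤ η * ‖y k‖ := fun k =>
      ((ContinuousLinearMap.adjoint (Q k (k + d).toNat)).le_opNorm (y k)).trans (by
        rw [LinearIsometryEquiv.norm_map]
        exact mul_le_mul_of_nonneg_right (hη _ _) (norm_nonneg _))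
    calc √(∑ k ∈ G, ‖y' k‖ ^ 2) ≤ √(∑ k ∈ G, (η * ‖y k‖) ^ 2) :=
          Real.sqrt_le_sqrt (Finset.sum_le_sum fun k _ =>
            pow_le_pow_left₀ (norm_nonneg _) (hy'k k) 2)
      _ = η * √(∑ k ∈ G, ‖y k‖ ^ 2) := by
          simp_rw [mul_pow, ← Finset.mul_sum]
          rw [Real.sqrt_mul (sq_nonneg _), Real.sqrt_sq hη0]
  calc ‖∑ k ∈ G, ∑ j ∈ F, ⟪schur Q B k j (x j), y k⟫_ℂ‖
      = ‖∑ k ∈ G, ∑ j ∈ F, ⟪diagonalPart d B k j (x j), y' k⟫_ℂ‖ := by simp only [hterm]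
    _ ≤ D * √(∑ j ∈ F, ‖x j‖ ^ 2) * √(∑ k ∈ G, ‖y' k‖ ^ 2) := hB.diagonalPart d F G x y'
    _ ≤ D * √(∑ j ∈ F, ‖x j‖ ^ 2) * (η * √(∑ k ∈ G, ‖y k‖ ^ 2)) := by gcongr
    _ = η * D * √(∑ j ∈ F, ‖x j‖ ^ 2) * √(∑ k ∈ G, ‖y k‖ ^ 2) := by ring

theorem mlBoundedBy_of_band [CompleteSpace E] (N : ℕ)
    (hQ : ∀ k j : ℕ, N < ((j : ℤ) - k).natAbs → Q k j = 0)
    (hη : ∀ k j, ‖Q k j‖ ≤ η) : MlBoundedBy Q ((2 * N + 1) * η) := by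
  have hη0 : 0 ≤ η := (norm_nonneg _).trans (hη 0 0)
  have hsum : Q = fun k j => ∑ d ∈ Icc (-N : ℤ) N, diagonalPart d Q k j := by
    funext k j
    simp only [diagonalPart, Finset.sum_ite_eq, Finset.mem_Icc]
    split_ifs with h
    · rfl
    · exact hQ k j (by omega)
  have hdiag : ∀ d ∈ Icc (-N : ℤ) N, MlBoundedBy (diagonalPart d Q) η := fun d _ =>
    mlBoundedBy_of_diagonalPart_eq d (by funext k j; simp only [diagonalPart]; split_ifs <;> rfl)
      fun k j => by simp only [diagonalPart]; split_ifs <;> simp [hη, hη0]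
  rw [hsum]
  refine (MlBoundedBy.sum _ hdiag).mono (le_of_eq ?_)
  rw [Finset.sum_const, Int.card_Icc, nsmul_eq_mul,
    show (N + 1 - -(N : ℤ)).toNat = 2 * N + 1 by omega]
  push_cast
  ring

theorem IsMatPoly.exists_mlBoundedBy_modMatrix_sub [CompleteSpace E] (hP : IsMatPoly P) :
    ∃ K, 0 ≤ K ∧ ∀ s t, MlBoundedBy (fun k j => modMatrix P s k j - modMatrix P t k j)
      (K * |s - t|) := by
  obtain ⟨⟨N, hN⟩, M, hM⟩ := hP
  have hM0 : 0 ≤ M := (norm_nonneg _).trans (hM 0 0)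
  refine ⟨(2 * N + 1) * (N * M), by positivity, fun s t => ?_⟩
  have hentry : ∀ k j, modMatrix P s k j - modMatrix P t k j
      = (phase (j - k) s - phase (j - k) t) • P k j := fun k j => (sub_smul _ _ _).symm
  refine (mlBoundedBy_of_band N (fun k j h => by simp [hentry, hN k j h]) fun k j => ?_).mono
    (le_of_eq (by ring : (2 * N + 1) * (N * M * |s - t|) = (2 * N + 1) * (N * M) * |s - t|))
  by_cases h : N < ((j : ℤ) - k).natAbs
  · simp only [hentry, hN k j h, smul_zero, norm_zero]
    positivity
  have hd : |(((j : ℤ) - k : ℤ) : ℝ)| ≤ N := by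
    rw [← Int.cast_abs, Int.abs_eq_natAbs]
    exact_mod_cast not_lt.1 h
  rw [hentry, norm_smul]
  calc ‖phase (j - k) s - phase (j - k) t‖ * ‖P k j‖ ≤ (N * |s - t|) * M :=
        mul_le_mul ((norm_phase_sub_phase_le _ s t).trans (by gcongr)) (hM k j)
          (norm_nonneg _) (by positivity)
    _ = N * M * |s - t| := by ring

def fejerMean (n : ℕ) (A : ℕ → ℕ → (E →L[ℂ] E)) : ℕ → ℕ → (E →L[ℂ] E) :=
  fun k j => (fejerCoeff n (j - k) : ℂ) • A k j

theorem isMatPoly_fejerMean (n : ℕ) (hA : ∀ k j, ‖A k j‖ ≤ C) :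
    IsMatPoly (fejerMean n A) := by
  refine ⟨⟨n, fun k j h => by simp [fejerMean, fejerCoeff_eq_zero h]⟩, C, fun k j => ?_⟩
  rw [fejerMean, norm_smul, Complex.norm_real, Real.norm_eq_abs]
  exact (mul_le_of_le_one_left (norm_nonneg _) (abs_fejerCoeff_le_one n _)).trans (hA k j)

theorem sub_fejerMean_eq_sum (A : ℕ → ℕ → (E →L[ℂ] E)) {n m k j : ℕ}
    (hm : n + ((j : ℤ) - k).natAbs < m) :
    A k j - fejerMean n A k j = ∑ l ∈ range m, ((fejerKernel n (2 * π * l / m) / m : ℝ) : ℂ) •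
      (A k j - modMatrix A (2 * π * l / m) k j) := by
  set w : ℕ → ℝ := fun l => fejerKernel n (2 * π * l / m) / m
  have hw : ∑ l ∈ range m, (w l : ℂ) = 1 := by exact_mod_cast sum_fejerKernel_div (by omega)
  have hcoeff : ((1 - fejerCoeff n (j - k) : ℝ) : ℂ) =
      ∑ l ∈ range m, (w l : ℂ) * (1 - phase (j - k) (2 * π * l / m)) := by
    simp only [mul_sub, mul_one, Finset.sum_sub_distrib, hw, w]
    rw [sum_fejerKernel_mul_phase hm]
    push_cast
    rfl
  calc A k j - fejerMean n A k j = ((1 - fejerCoeff n (j - k) : ℝ) : ℂ) • A k j := by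
        simp only [fejerMean, Complex.ofReal_sub, Complex.ofReal_one, sub_smul, one_smul]
    _ = ∑ l ∈ range m, (w l : ℂ) • ((1 - phase (j - k) (2 * π * l / m)) • A k j) := by
        simp only [hcoeff, Finset.sum_smul, smul_smul]
    _ = _ := by simp only [modMatrix_apply, sub_smul, one_smul, w]

theorem mlBoundedBy_sub_modMatrix_ite {δ t : ℝ} (ht₀ : 0 ≤ t) (ht : t < 2 * π)
    (hnear : ∀ s, |s| < δ → MlBoundedBy (fun k j => A k j - modMatrix A s k j) η)
    (hfar : ∀ s, MlBoundedBy (fun k j => A k j - modMatrix A s k j) C) :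
    MlBoundedBy (fun k j => A k j - modMatrix A t k j)
      (if δ ≤ t ∧ t ≤ 2 * π - δ then C else η) := by
  split_ifs with hδt
  · exact hfar t
  rcases not_and_or.1 hδt with h | h
  · exact hnear t (by rw [abs_of_nonneg ht₀]; linarith)
  · rw [← modMatrix_sub_two_pi]
    exact hnear _ (by rw [abs_of_neg (by linarith)]; linarith)

theorem mlBoundedBy_sub_fejerMean (n : ℕ) {δ : ℝ} (hη : 0 ≤ η) (hC : 0 ≤ C) (hδ : 0 < δ)
    (hnear : ∀ s, |s| < δ → MlBoundedBy (fun k j => A k j - modMatrix A s k j) η)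
    (hfar : ∀ s, MlBoundedBy (fun k j => A k j - modMatrix A s k j) C) :
    MlBoundedBy (fun k j => A k j - fejerMean n A k j) (η + π ^ 2 / ((n + 1) * δ ^ 2) * C) := by
  intro B D hD hB F G x y
  set m := n + F.sup id + G.sup id + 1
  set t : ℕ → ℝ := fun l => 2 * π * l / m
  set c : ℕ → ℝ := fun l => if δ ≤ t l ∧ t l ≤ 2 * π - δ then C else η
  have hsample : ∀ l ∈ range m,
      SchurBoundedBy (schur (fun k j => A k j - modMatrix A (t l) k j) B) (c l * D) := by
    intro l hl
    have ht : t l < 2 * π := by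
      rw [div_lt_iff₀ (by positivity), mul_lt_mul_iff_of_pos_left (by positivity)]
      exact_mod_cast mem_range.1 hl
    exact mlBoundedBy_sub_modMatrix_ite (by positivity) ht hnear hfar B D hD hB
  have hentry : ∀ k ∈ G, ∀ j ∈ F, schur (fun k j => A k j - fejerMean n A k j) B k j =
      ∑ l ∈ range m, ((fejerKernel n (t l) / m : ℝ) : ℂ) •
        schur (fun k j => A k j - modMatrix A (t l) k j) B k j := by
    intro k hk j hj
    have hk' : k ≤ G.sup id := le_sup (f := id) hk
    have hj' : j ≤ F.sup id := le_sup (f := id) hj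
    simp only [schur]
    rw [sub_fejerMean_eq_sum A (m := m) (by omega), ContinuousLinearMap.finsetSum_comp]
    simp only [ContinuousLinearMap.smul_comp, t]
  have hweights : ∑ l ∈ range m, ‖((fejerKernel n (t l) / m : ℝ) : ℂ)‖ * (c l * D) ≤
      (η + π ^ 2 / ((n + 1) * δ ^ 2) * C) * D := by
    simp only [Complex.norm_real, Real.norm_of_nonneg
      (div_nonneg (fejerKernel_nonneg _ _) (Nat.cast_nonneg _)), ← mul_assoc, ← Finset.sum_mul]
    exact mul_le_mul_of_nonneg_right (sum_fejerKernel_div_mul_ite_le (by omega) hη hC hδ) hD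
  exact ((SchurBoundedBy.sum_smul _ _ hsample).norm_sum_inner_le_of_eqOn hentry x y).trans
    (by gcongr)

theorem MemL1l.exists_mlBoundedBy_modMatrix_sub [CompleteSpace E] (hA : MemL1l A) (t : ℝ)
    {ε : ℝ} (hε : 0 < ε) : ∃ δ : ℝ, 0 < δ ∧ ∀ s : ℝ, |s - t| < δ →
      MlBoundedBy (fun k j => modMatrix A s k j - modMatrix A t k j) ε := by
  obtain ⟨P, hP, hAP⟩ := hA.2 (ε / 3) (by positivity)
  obtain ⟨K, hK, hPK⟩ := hP.exists_mlBoundedBy_modMatrix_sub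
  refine ⟨ε / (3 * (K + 1)), by positivity, fun s hs => ?_⟩
  have hsplit : (fun k j => modMatrix A s k j - modMatrix A t k j) = fun k j =>
      (modMatrix (fun k j => A k j - P k j) s k j - modMatrix (fun k j => A k j - P k j) t k j) +
        (modMatrix P s k j - modMatrix P t k j) := by
    funext k j
    simp only [modMatrix_apply, smul_sub]
    abel
  have hKst : K * |s - t| ≤ ε / 3 := by
    calc K * |s - t| ≤ (K + 1) * (ε / (3 * (K + 1))) := by gcongr; linarith
      _ = ε / 3 := by field_simp
  rw [hsplit]
  exact (((hAP.modMatrix s).sub (hAP.modMatrix t)).add (hPK s t)).mono (by linarith)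

theorem memL1l_of_forall_abs_lt (hA : MemMl A)
    (hcont : ∀ ε : ℝ, 0 < ε → ∃ δ : ℝ, 0 < δ ∧ ∀ s : ℝ, |s| < δ →
      MlBoundedBy (fun k j => modMatrix A s k j - A k j) ε) : MemL1l A := by
  obtain ⟨C, hC, hAC⟩ := hA
  refine ⟨⟨C, hC, hAC⟩, fun ε hε => ?_⟩
  obtain ⟨δ, hδ, hnear⟩ := hcont (ε / 2) (by positivity)
  obtain ⟨n, hn⟩ := exists_nat_gt (2 * π ^ 2 * (C + C) / (ε * δ ^ 2))
  refine ⟨fejerMean n A, isMatPoly_fejerMean n (hAC.norm_apply_le hC), ?_⟩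
  refine (mlBoundedBy_sub_fejerMean n (η := ε / 2) (C := C + C) (by positivity) (by positivity) hδ
    (fun s hs => by simpa only [neg_sub] using (hnear s hs).neg)
    (fun s => hAC.sub (hAC.modMatrix s))).mono ?_
  rw [div_lt_iff₀ (by positivity)] at hn
  have : π ^ 2 / ((n + 1) * δ ^ 2) * (C + C) ≤ ε / 2 := by
    rw [div_mul_eq_mul_div, div_le_iff₀ (by positivity)]
    nlinarith [mul_pos hε (pow_pos hδ 2)]
  linarith

end Matrices

/-- `A ∈ L¹_l(ℓ²(H))` iff `t ↦ f_A(t)` is a continuous `M_l(ℓ²(H))`-valued function. -/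
theorem memL1l_iff_modMatrix_continuous (A : ℕ → ℕ → (H →L[ℂ] H)) :
    MemL1l A ↔
      ((∀ t : ℝ, MemMl (modMatrix A t)) ∧
        ∀ t : ℝ, ∀ ε : ℝ, 0 < ε → ∃ δ : ℝ, 0 < δ ∧ ∀ s : ℝ, |s - t| < δ →
          MlBoundedBy (fun k j => modMatrix A s k j - modMatrix A t k j) ε) := by
  refine ⟨fun hA => ⟨hA.1.modMatrix, fun t _ => hA.exists_mlBoundedBy_modMatrix_sub t⟩,
    fun ⟨hMl, hcont⟩ => memL1l_of_forall_abs_lt (by simpa only [modMatrix_zero] using hMl 0)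
      fun ε hε => ?_⟩
  simpa only [sub_zero, modMatrix_zero] using hcont 0 ε hε
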